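/- For positive real numbers a, b with ab = 1, sqrt(a)·(1/(2a) − Σ_{n=1}^∞ e^{−πa²n²}) = sqrt(b)·(1/(2b) − Σ_{n=1}^∞ e^{−πb²n²}). -/

import Mathlib

/-!
With `θ(t) = ∑_{n ∈ ℤ} exp(-π t n²) = 1 + 2 ∑_{n ≥ 1} exp(-π t n²)`, Poisson summation gives
`θ(a²) = a⁻¹ θ(a⁻²)`, i.e. `θ(a²) = b θ(b²)` when `ab = 1`. Multiplying by `√a / 2` and using
`√a · b = √b` turns this into the claimed identity.
-/

open Real

lemma summable_exp_neg_mul_nat_sq {c : ℝ} (hc : 0 < c) :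
    Summable fun n : ℕ ↦ exp (-π * c * (n : ℝ) ^ 2) := by
  have hq : exp (-π * c) < 1 := exp_lt_one_iff.mpr (by nlinarith [pi_pos])
  refine (summable_geometric_of_lt_one (exp_pos _).le hq).of_nonneg_of_le
    (fun _ ↦ (exp_pos _).le) fun n ↦ ?_
  rw [← exp_nat_mul, exp_le_exp]
  have hn : (n : ℝ) ≤ (n : ℝ) ^ 2 := by exact_mod_cast Nat.le_self_pow two_ne_zero n
  nlinarith [mul_pos pi_pos hc]

lemma summable_exp_neg_mul_int_sq {c : ℝ} (hc : 0 < c) :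
    Summable fun n : ℤ ↦ exp (-π * c * (n : ℝ) ^ 2) :=
  Summable.of_nat_of_neg (by simpa using summable_exp_neg_mul_nat_sq hc)
    (by simpa using summable_exp_neg_mul_nat_sq hc)

lemma tsum_exp_neg_mul_int_sq_eq_one_add_two_mul {c : ℝ} (hc : 0 < c) :
    ∑' n : ℤ, exp (-π * c * (n : ℝ) ^ 2) =
      1 + 2 * ∑' n : ℕ, exp (-π * c * ((n : ℝ) + 1) ^ 2) := by
  rw [tsum_int_eq_zero_add_two_mul_tsum_pnat (fun n ↦ by simp) (summable_exp_neg_mul_int_sq hc),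
    tsum_pnat_eq_tsum_succ (f := fun n : ℕ ↦ exp (-π * c * ((n : ℤ) : ℝ) ^ 2))]
  simp

lemma tsum_exp_neg_mul_sq_int_sq_of_mul_eq_one {a b : ℝ} (ha : 0 < a) (hab : a * b = 1) :
    ∑' n : ℤ, exp (-π * a ^ 2 * (n : ℝ) ^ 2) = b * ∑' n : ℤ, exp (-π * b ^ 2 * (n : ℝ) ^ 2) := by
  have hb : b = a⁻¹ := eq_inv_of_mul_eq_one_right hab
  have hroot : (a ^ 2) ^ (1 / 2 : ℝ) = a := by
    rw [← sqrt_eq_rpow, sqrt_sq ha.le]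
  rw [tsum_exp_neg_mul_int_sq (by positivity), hroot, hb, inv_pow, one_div, div_eq_mul_inv]

theorem theta_transformation_ab (a b : ℝ) (ha : 0 < a) (hb : 0 < b)
    (hab : a * b = 1) :
    Real.sqrt a * (1 / (2 * a) - ∑' n : ℕ, Real.exp (-π * a ^ 2 * ((n : ℝ) + 1) ^ 2)) =
      Real.sqrt b * (1 / (2 * b) - ∑' n : ℕ, Real.exp (-π * b ^ 2 * ((n : ℝ) + 1) ^ 2)) := by
  have key := tsum_exp_neg_mul_sq_int_sq_of_mul_eq_one ha hab
  rw [tsum_exp_neg_mul_int_sq_eq_one_add_two_mul (by positivity),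
    tsum_exp_neg_mul_int_sq_eq_one_add_two_mul (by positivity)] at key
  generalize ∑' n : ℕ, exp (-π * a ^ 2 * ((n : ℝ) + 1) ^ 2) = A at key ⊢
  generalize ∑' n : ℕ, exp (-π * b ^ 2 * ((n : ℝ) + 1) ^ 2) = B at key ⊢
  obtain ⟨s, hs, rfl⟩ : ∃ s, 0 < s ∧ s ^ 2 = a := ⟨√a, sqrt_pos.mpr ha, sq_sqrt ha.le⟩
  obtain ⟨t, ht, rfl⟩ : ∃ t, 0 < t ∧ t ^ 2 = b := ⟨√b, sqrt_pos.mpr hb, sq_sqrt hb.le⟩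
  have hst : s * t = 1 := by nlinarith [mul_pos hs ht]
  rw [sqrt_sq hs.le, sqrt_sq ht.le]
  field_simp
  linear_combination -s * key - (2 * s * A + t) * hst
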